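/- Let d be a power of 2. There exists a hypergraph H (with hyperedge multiset) whose vertices form a complete rooted binary tree with log2(d)+1 levels, with every hyperedge a level-descending path ending at a leaf, such that the maximum vertex degree of H is at most 2d, and for every i with 0 ≤ i ≤ log2(d), every full branch contains exactly 2^i bottom hyperedges (counted with multiplicity) of size log2(d)+1−i. -/

import Mathlib

/-- The finset of all boolean lists of length `k` (nodes on level `k` of the
complete infinite rooted binary tree). -/
def listsOfLen : ℕ → Finset (List Bool)
  | 0 => {[]}
  | k+1 => (listsOfLen k).image (· ++ [true]) ∪ (listsOfLen k).image (· ++ [false])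

/-- The vertex set of the full branch (root-to-`l` path) ending at the node `l`. -/
def prefixesF (l : List Bool) : Finset (List Bool) :=
  (Finset.range (l.length + 1)).image (fun i => l.take i)

/-- The vertex set of the level-descending path starting at node `p` and
ending at node `p ++ q`. -/
def pathFinset (p q : List Bool) : Finset (List Bool) :=
  (Finset.range (q.length + 1)).image (fun i => p ++ q.take i)

/-- `S` is (the node set of) a rooted binary tree: it contains the root, is
prefix-closed, and every node has either zero or two children. -/
def IsBinTree (S : Finset (List Bool)) : Prop :=
  [] ∈ S ∧ (∀ l ∈ S, ∀ p : List Bool, p <+: l → p ∈ S) ∧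
    ∀ l ∈ S, ((l ++ [true]) ∈ S ↔ (l ++ [false]) ∈ S)

/-- `l` is a leaf of the tree `S`. -/
def IsLeaf (S : Finset (List Bool)) (l : List Bool) : Prop :=
  l ∈ S ∧ (l ++ [true]) ∉ S ∧ (l ++ [false]) ∉ S

/-- The edge `e` is a level-descending path inside the tree `S`. -/
def InTree (S : Finset (List Bool)) (e : Finset (List Bool)) : Prop :=
  ∃ p q : List Bool, (p ++ q) ∈ S ∧ e = pathFinset p q

/-- Degree of vertex `v` in a hypergraph with hyperedge multiset `E`
(counted with multiplicity). -/
def mDegree (E : Multiset (Finset (List Bool))) (v : List Bool) : ℕ :=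
  Multiset.countP (fun e => v ∈ e) E

/-- The number (with multiplicity) of bottom hyperedges of size `L` of the full
branch ending at the leaf `l`: hyperedges contained in the branch and ending at `l`. -/
def bottomCount (E : Multiset (Finset (List Bool))) (l : List Bool) (L : ℕ) : ℕ :=
  Multiset.countP (fun e => l ∈ e ∧ e ⊆ prefixesF l ∧ e.card = L) E

/-- With `d = 2^m`, the full branch ending at leaf `l` contains bottom units of
power `k` whose multiset of lengths is `ls`: a unit of power `k` and length `L`
consists of `2^(m+1+k-L)` hyperedges of size `L` ending at `l`. -/
def HasBottomUnits (m k : ℕ) (E : Multiset (Finset (List Bool))) (l : List Bool)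
    (ls : Multiset ℕ) : Prop :=
  (∀ L ∈ ls, k ≤ L ∧ L ≤ m + 1 + k) ∧
  ∀ L : ℕ, ls.count L * 2 ^ (m + 1 + k - L) ≤ bottomCount E l L

/-!
Put `2^j` copies of every path that starts at level `j` and descends to a leaf. A vertex `v`
at level `s` lies only on paths that start at one of its `s + 1` ancestors `v.take j` and end
at one of the `2^(m-s)` leaves below `v`, so its degree is at most
`(2^0 + ⋯ + 2^s) · 2^(m-s) < 2^(m+1)`. A path that ends at the leaf `l`, lies on its
branch and has `m + 1 - i` vertices must start at `l.take i`, so it is the single path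
from level `i`, which carries multiplicity `2^i`.
-/

open Finset

lemma mem_listsOfLen {k : ℕ} {l : List Bool} : l ∈ listsOfLen k ↔ l.length = k := by
  induction k generalizing l with
  | zero => simp [listsOfLen, List.length_eq_zero_iff]
  | succ k ih =>
    simp only [listsOfLen, mem_union, mem_image]
    constructor
    · rintro (⟨a, ha, rfl⟩ | ⟨a, ha, rfl⟩) <;> simp [ih.1 ha]
    · intro h
      rcases List.eq_nil_or_concat l with rfl | ⟨a, b, rfl⟩
      · simp at h
      · have ha : a.length = k := by simpa using h
        cases b
        · exact Or.inr ⟨a, ih.2 ha, by simp⟩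
        · exact Or.inl ⟨a, ih.2 ha, by simp⟩

lemma card_listsOfLen (k : ℕ) : #(listsOfLen k) = 2 ^ k := by
  induction k with
  | zero => simp [listsOfLen]
  | succ k ih =>
    have hinj (b : Bool) : Function.Injective (· ++ [b] : List Bool → List Bool) :=
      fun _ _ h => List.append_cancel_right h
    have hdisj : Disjoint ((listsOfLen k).image (· ++ [true]))
        ((listsOfLen k).image (· ++ [false])) := by
      simp only [disjoint_left, mem_image]
      rintro _ ⟨a, -, rfl⟩ ⟨c, -, h⟩
      simpa using (List.append_inj' h rfl).2
    rw [listsOfLen, card_union_of_disjoint hdisj, card_image_of_injective _ (hinj true),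
      card_image_of_injective _ (hinj false), ih, pow_succ, mul_two]

lemma mem_pathFinset {p q v : List Bool} : v ∈ pathFinset p q ↔ p <+: v ∧ v <+: p ++ q := by
  simp only [pathFinset, mem_image, mem_range, Nat.lt_succ_iff]
  constructor
  · rintro ⟨t, -, rfl⟩
    exact ⟨List.prefix_append _ _, (List.prefix_append_right_inj p).2 (List.take_prefix t q)⟩
  · rintro ⟨⟨r, rfl⟩, hv⟩
    have hr : r <+: q := (List.prefix_append_right_inj p).1 hv
    exact ⟨r.length, hr.length_le, by rw [← List.prefix_iff_eq_take.1 hr]⟩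

lemma mem_prefixesF {l v : List Bool} : v ∈ prefixesF l ↔ v <+: l := by
  have : prefixesF l = pathFinset [] l := by simp [prefixesF, pathFinset]
  simp [this, mem_pathFinset]

lemma card_pathFinset (p q : List Bool) : #(pathFinset p q) = q.length + 1 := by
  rw [pathFinset, card_image_of_injOn, card_range]
  intro i hi j hj h
  simp only [coe_range, Set.mem_Iio, Nat.lt_succ_iff] at hi hj
  simpa [Nat.min_eq_left hi, Nat.min_eq_left hj] using congrArg List.length h

/-- Index set of the paths descending from a node `p` at level `j` to the leaf `p ++ q` at
level `m`. -/
abbrev levelPaths (m j : ℕ) : Finset (List Bool × List Bool) :=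
  listsOfLen j ×ˢ listsOfLen (m - j)

def unitTree (m : ℕ) : Multiset (Finset (List Bool)) :=
  ∑ j ∈ range (m + 1), ∑ pq ∈ levelPaths m j, 2 ^ j • {pathFinset pq.1 pq.2}

lemma exists_path_of_mem_unitTree {m : ℕ} {e : Finset (List Bool)} (he : e ∈ unitTree m) :
    ∃ p q : List Bool, (p ++ q).length = m ∧ e = pathFinset p q := by
  simp only [unitTree, Multiset.mem_sum, mem_range] at he
  obtain ⟨j, hj, ⟨p, q⟩, hpq, he⟩ := he
  simp only [mem_product, mem_listsOfLen] at hpq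
  refine ⟨p, q, by simp only [List.length_append, hpq]; omega, ?_⟩
  simpa using Multiset.mem_of_mem_nsmul he

lemma countP_unitTree (m : ℕ) (P : Finset (List Bool) → Prop) [DecidablePred P] :
    (unitTree m).countP P =
      ∑ j ∈ range (m + 1), 2 ^ j * #{pq ∈ levelPaths m j | P (pathFinset pq.1 pq.2)} := by
  rw [← Multiset.coe_countPAddMonoidHom, unitTree, map_sum]
  refine sum_congr rfl fun j _ => ?_
  rw [map_sum, card_filter, mul_sum]
  refine sum_congr rfl fun pq _ => ?_
  rw [map_nsmul, smul_eq_mul, Multiset.coe_countPAddMonoidHom, ← Multiset.cons_zero,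
    Multiset.countP_cons, Multiset.countP_zero, zero_add]

lemma card_filter_mem_pathFinset_le {m : ℕ} (j : ℕ) {v : List Bool} (hv : v.length ≤ m) :
    #{pq ∈ levelPaths m j | v ∈ pathFinset pq.1 pq.2} ≤
      if j ≤ v.length then 2 ^ (m - v.length) else 0 := by
  have hmem : ∀ pq ∈ {pq ∈ levelPaths m j | v ∈ pathFinset pq.1 pq.2},
      pq.1.length = j ∧ j ≤ v.length ∧ (pq.1 ++ pq.2).length = m ∧
        v ++ (pq.1 ++ pq.2).drop v.length = pq.1 ++ pq.2 := by
    rintro ⟨p, q⟩ hpq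
    simp only [mem_filter, mem_product, mem_listsOfLen, mem_pathFinset] at hpq
    obtain ⟨⟨hp, hq⟩, hpv, hvpq⟩ := hpq
    have := hpv.length_le
    exact ⟨hp, hp ▸ this, by simp only [List.length_append]; omega,
      List.prefix_iff_eq_append.1 hvpq⟩
  split_ifs with hj
  · rw [← card_listsOfLen (m - v.length)]
    refine card_le_card_of_injOn (fun pq => (pq.1 ++ pq.2).drop v.length) ?_ ?_
    · intro pq hpq
      simp [mem_listsOfLen, (hmem pq hpq).2.2.1]
    · intro pq hpq pq' hpq' h
      obtain ⟨hp, -, -, hv⟩ := hmem pq hpq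
      obtain ⟨hp', -, -, hv'⟩ := hmem pq' hpq'
      have happ : pq.1 ++ pq.2 = pq'.1 ++ pq'.2 := by rw [← hv, ← hv']; exact congrArg _ h
      obtain ⟨h1, h2⟩ := List.append_inj happ (hp.trans hp'.symm)
      exact Prod.ext h1 h2
  · refine (card_eq_zero.2 (eq_empty_of_forall_notMem fun pq hpq => ?_)).le
    exact hj (hmem pq hpq).2.1

lemma mDegree_unitTree_le (m : ℕ) (v : List Bool) : mDegree (unitTree m) v ≤ 2 * 2 ^ m := by
  by_cases hv : v.length ≤ m
  · calc mDegree (unitTree m) v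
        = ∑ j ∈ range (m + 1), 2 ^ j * #{pq ∈ levelPaths m j | v ∈ pathFinset pq.1 pq.2} :=
          countP_unitTree m _
      _ ≤ ∑ j ∈ range (m + 1), 2 ^ j * if j ≤ v.length then 2 ^ (m - v.length) else 0 := by
          gcongr with j
          exact card_filter_mem_pathFinset_le j hv
      _ = (∑ j ∈ range (v.length + 1), 2 ^ j) * 2 ^ (m - v.length) := by
          rw [sum_mul, ← sum_range_add_sum_Ico _ (by omega : v.length + 1 ≤ m + 1),
            sum_eq_zero (s := Ico _ _) fun j hj => by simp [Nat.not_le.2 (mem_Ico.1 hj).1], add_zero]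
          exact sum_congr rfl fun j hj => by simp [Nat.lt_succ_iff.1 (mem_range.1 hj)]
      _ ≤ 2 ^ (v.length + 1) * 2 ^ (m - v.length) :=
          Nat.mul_le_mul_right _ (Nat.geomSum_lt le_rfl fun _ => mem_range.1).le
      _ = 2 * 2 ^ m := by rw [← pow_add, ← pow_succ']; congr 1; omega
  · refine (Multiset.countP_eq_zero.2 fun e he hve => hv ?_).trans_le (Nat.zero_le _)
    obtain ⟨p, q, hpq, rfl⟩ := exists_path_of_mem_unitTree he
    exact hpq ▸ (mem_pathFinset.1 hve).2.length_le

lemma filter_bottom_levelPaths {m i : ℕ} (hi : i ≤ m) (j : ℕ) {l : List Bool}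
    (hl : l.length = m) :
    {pq ∈ levelPaths m j | l ∈ pathFinset pq.1 pq.2 ∧ pathFinset pq.1 pq.2 ⊆ prefixesF l ∧
        #(pathFinset pq.1 pq.2) = m + 1 - i} =
      if j = i then {(l.take i, l.drop i)} else ∅ := by
  ext ⟨p, q⟩
  simp only [mem_filter, mem_product, mem_listsOfLen, mem_pathFinset, card_pathFinset]
  constructor
  · rintro ⟨⟨hp, hq⟩, ⟨hpl, hlpq⟩, -, hcard⟩
    have hj : j ≤ m := hp ▸ hl ▸ hpl.length_le
    have hji : j = i := by omega
    have hlpq' : l = p ++ q := hlpq.eq_of_length (by simp only [List.length_append]; omega)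
    subst hji hlpq'
    simp [List.take_left' hp, List.drop_left' hp]
  · split_ifs with hji
    · simp only [mem_singleton, Prod.mk.injEq]
      rintro ⟨rfl, rfl⟩
      refine ⟨⟨by simp; omega, by simp; omega⟩, ⟨List.take_prefix _ _, by simp⟩,
        fun v hv => ?_, by simp; omega⟩
      simpa [mem_prefixesF] using (mem_pathFinset.1 hv).2
    · simp

lemma bottomCount_unitTree {m i : ℕ} (hi : i ≤ m) {l : List Bool} (hl : l.length = m) :
    bottomCount (unitTree m) l (m + 1 - i) = 2 ^ i := by
  rw [bottomCount, countP_unitTree]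
  simp_rw [filter_bottom_levelPaths hi _ hl, apply_ite card, card_singleton, card_empty,
    mul_ite, mul_one, mul_zero]
  simp [sum_ite_eq', Nat.lt_succ_iff.2 hi]

/-- With `d = 2^m` a power of 2, there is a hypergraph (with hyperedge
multiplicities) on the complete binary tree with `m+1` levels, all hyperedges
level-descending paths ending at a leaf, with maximum degree at most `2d`, such
that for each `i ≤ m` every full branch contains exactly `2^i` bottom hyperedges
of size `m + 1 - i`. -/
theorem unit_tree_exists (m : ℕ) :
    ∃ E : Multiset (Finset (List Bool)),
      (∀ e ∈ E, ∃ p q : List Bool, (p ++ q).length = m ∧ e = pathFinset p q) ∧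
      (∀ v : List Bool, mDegree E v ≤ 2 * 2 ^ m) ∧
      (∀ l ∈ listsOfLen m, ∀ i ≤ m, bottomCount E l (m + 1 - i) = 2 ^ i) :=
  ⟨unitTree m, fun _ => exists_path_of_mem_unitTree, mDegree_unitTree_le m,
    fun _ hl _ hi => bottomCount_unitTree hi (mem_listsOfLen.1 hl)⟩
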